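/- Let k, p ∈ ℕ with k ≥ 2 and p ≥ 2, and let R > 0. For every (i,j) ∈ 𝓒^k ∪ 𝓖^k there exists C > 0 such that for every u ∈ H^k(𝕋) with ‖u‖_{H¹(𝕋)} ≤ R one has ∫_𝕋 |∂_x^{i₁}u ⋯ ∂_x^{i_n}u · ∂_x^{j₁}ū ⋯ ∂_x^{j_n}ū| dx ≤ C ‖u‖_{H^k(𝕋)}^{(2k−4)/(k−1)}. -/

import Mathlib

open MeasureTheory intervalIntegral
open scoped ContDiff
open scoped Real BigOperators ENNReal

noncomputable section

/-- `n`-th spatial derivative. -/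
def pD (n : ℕ) (f : ℝ → ℂ) : ℝ → ℂ := iteratedDeriv n f

/-- Complex conjugate of the `n`-th spatial derivative. -/
def cD (n : ℕ) (f : ℝ → ℂ) (x : ℝ) : ℂ := (starRingEnd ℂ) (iteratedDeriv n f x)

/-- Integral over one period of the torus `𝕋 = ℝ/2πℤ`. -/
def tInt (f : ℝ → ℂ) : ℂ := ∫ x in (0:ℝ)..(2 * Real.pi), f x

/-- Squared `L²(𝕋)` norm. -/
def L2sq (f : ℝ → ℂ) : ℝ := ∫ x in (0:ℝ)..(2 * Real.pi), ‖f x‖ ^ 2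

/-- Squared `Hᵏ(𝕋)` norm: `‖u‖² = ‖u‖²_{L²} + ‖∂ₓᵏu‖²_{L²}`. -/
def HkSq (k : ℕ) (f : ℝ → ℂ) : ℝ := L2sq f + L2sq (pD k f)

/-- `Hᵏ(𝕋)` norm. -/
def HkNorm (k : ℕ) (f : ℝ → ℂ) : ℝ := Real.sqrt (HkSq k f)

/-- A classical (smooth and `2π`-periodic in space, differentiable in time) solution of the
defocusing NLS `i ∂ₜ u + ∂ₓ² u - u |u|^{2p} = 0` for times in the set `I`. -/
structure IsNLS (p : ℕ) (I : Set ℝ) (u : ℝ → ℝ → ℂ) : Prop where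
  smooth : ∀ t ∈ I, ContDiff ℝ (⊤ : ℕ∞) (u t)
  periodic : ∀ t ∈ I, Function.Periodic (u t) (2 * Real.pi)
  tdiff : ∀ (x : ℝ), ∀ t ∈ I, DifferentiableAt ℝ (fun s => u s x) t
  eqn : ∀ t ∈ I, ∀ x : ℝ,
    Complex.I * deriv (fun s => u s x) t + pD 2 (u t) x
      = u t x * ((‖u t x‖ : ℂ)) ^ (2 * p)

/-- The entries of the multi-index are nonincreasing. -/
def antitoneIdx {n : ℕ} (i : Fin n → ℕ) : Prop := ∀ l l' : Fin n, l ≤ l' → i l' ≤ i l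

/-- The functional `𝓙_{(i,j)}(u) = ∫ ∂ₓ^{i₁}u ⋯ ∂ₓ^{iₙ}u ∂ₓ^{j₁}ū ⋯ ∂ₓ^{jₙ}ū`. -/
def Jfun {n : ℕ} (ij : (Fin n → ℕ) × (Fin n → ℕ)) (f : ℝ → ℂ) : ℂ :=
  tInt fun x => (∏ l, pD (ij.1 l) f x) * ∏ l, cD (ij.2 l) f x

/-- The index set `𝓒ᵏ`. -/
def Cset (p k : ℕ) : Set ((Fin (2 * p + 1) → ℕ) × (Fin (2 * p + 1) → ℕ)) :=
  {ij | antitoneIdx ij.1 ∧ antitoneIdx ij.2 ∧ (∑ l, (ij.1 l + ij.2 l)) = 2 * k - 2 ∧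
    ij.1 0 ≤ k - 1 ∧ ij.2 0 ≤ k - 1}

/-- The index set `𝓓ᵏ`. -/
def Dset (p k : ℕ) : Set ((Fin (p + 1) → ℕ) × (Fin (p + 1) → ℕ)) :=
  {ij | antitoneIdx ij.1 ∧ antitoneIdx ij.2 ∧ (∑ l, (ij.1 l + ij.2 l)) = 2 * k ∧
    4 ≤ (∑ l, min (ij.1 l) 1) + ∑ l, min (ij.2 l) 1}

/-- The index set `𝓖ᵏ`. -/
def Gset (p k : ℕ) : Set ((Fin (p + 1) → ℕ) × (Fin (p + 1) → ℕ)) :=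
  {ij | antitoneIdx ij.1 ∧ antitoneIdx ij.2 ∧ (∑ l, (ij.1 l + ij.2 l)) = 2 * k - 2 ∧
    ij.1 0 ≤ k - 1 ∧ ij.2 0 ≤ k - 1}

section Helpers

lemma two_pi_pos' : (0:ℝ) < 2 * Real.pi := by positivity

/-- Cauchy-Schwarz for interval integrals. -/
lemma csineq (f g : ℝ → ℝ) (hf : Continuous f) (hg : Continuous g) :
    (∫ x in (0:ℝ)..(2*Real.pi), f x * g x) ≤
      Real.sqrt (∫ x in (0:ℝ)..(2*Real.pi), f x ^ 2) *
      Real.sqrt (∫ x in (0:ℝ)..(2*Real.pi), g x ^ 2) := by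
  have hpi : (0:ℝ) ≤ 2 * Real.pi := two_pi_pos'.le
  set A := ∫ x in (0:ℝ)..(2*Real.pi), f x ^ 2 with hA
  set B := ∫ x in (0:ℝ)..(2*Real.pi), g x ^ 2 with hB
  set C := ∫ x in (0:ℝ)..(2*Real.pi), f x * g x with hC
  have hfi : IntervalIntegrable (fun x => f x ^ 2) volume 0 (2*Real.pi) :=
    (hf.pow 2).intervalIntegrable _ _
  have hgi : IntervalIntegrable (fun x => g x ^ 2) volume 0 (2*Real.pi) :=
    (hg.pow 2).intervalIntegrable _ _
  have hfgi : IntervalIntegrable (fun x => f x * g x) volume 0 (2*Real.pi) :=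
    (hf.mul hg).intervalIntegrable _ _
  have hA0 : 0 ≤ A := integral_nonneg hpi (fun x _ => sq_nonneg _)
  have hB0 : 0 ≤ B := integral_nonneg hpi (fun x _ => sq_nonneg _)
  have key : ∀ t : ℝ, 0 ≤ t^2 * A - 2*t*C + B := by
    intro t
    have h1 : (0:ℝ) ≤ ∫ x in (0:ℝ)..(2*Real.pi), (t * f x - g x)^2 :=
      integral_nonneg hpi (fun x _ => sq_nonneg _)
    have h2 : (∫ x in (0:ℝ)..(2*Real.pi), (t * f x - g x)^2)
        = t^2 * A - 2*t*C + B := by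
      have : ∀ x : ℝ, (t * f x - g x)^2
          = t^2 * f x ^2 - 2*t*(f x * g x) + g x ^2 := by intro x; ring
      simp_rw [this]
      rw [integral_add (((hfi.const_mul _).sub (hfgi.const_mul _))) hgi,
        integral_sub (hfi.const_mul _) (hfgi.const_mul _),
        intervalIntegral.integral_const_mul, intervalIntegral.integral_const_mul]
    linarith [h2 ▸ h1]
  rw [← Real.sqrt_mul hA0]
  rcases le_or_gt C 0 with hCle | hCpos
  · exact hCle.trans (Real.sqrt_nonneg _)
  · have hsq : C^2 ≤ A * B := by
      rcases eq_or_lt_of_le hA0 with h | hApos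
      · exfalso
        have h1 := key ((B+1)/(2*C))
        rw [← h, mul_zero] at h1
        have h2 : (B+1)/(2*C) * C = (B+1)/2 := by field_simp
        nlinarith
      · have h1 := key (C/A)
        have h2 : (C/A)^2 * A = C^2/A := by field_simp
        have h3 : (C/A) * C = C^2/A := by field_simp
        rw [h2] at h1
        have : 0 ≤ B - C^2/A := by nlinarith [h3 ▸ h1]
        have := (div_le_iff₀ hApos).mp (by linarith : C^2/A ≤ B)
        linarith [this]
    calc C = Real.sqrt (C^2) := (Real.sqrt_sq hCpos.le).symm
    _ ≤ Real.sqrt (A*B) := Real.sqrt_le_sqrt hsq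

lemma periodic_deriv' {f : ℝ → ℂ} {T : ℝ} (hf : Function.Periodic f T) :
    Function.Periodic (deriv f) T := by
  intro x
  have h1 : (fun y : ℝ => f (y + T)) = f := funext fun y => hf y
  calc deriv f (x + T) = deriv (fun y => f (y + T)) x := (deriv_comp_add_const f T x).symm
  _ = deriv f x := by rw [h1]

lemma contDiff_iteratedDeriv {f : ℝ → ℂ} (hf : ContDiff ℝ ∞ f) (m : ℕ) :
    ContDiff ℝ ∞ (iteratedDeriv m f) := by
  rw [iteratedDeriv_eq_iterate]
  exact hf.iterate_deriv m

lemma periodic_iteratedDeriv {f : ℝ → ℂ} {T : ℝ} (hf : Function.Periodic f T) (m : ℕ) :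
    Function.Periodic (iteratedDeriv m f) T := by
  induction m with
  | zero => simpa using hf
  | succ m ih => rw [iteratedDeriv_succ]; exact periodic_deriv' ih

/-- Integration by parts inequality. -/
lemma ibp (g : ℝ → ℂ) (hg : ContDiff ℝ ∞ g)
    (hper : Function.Periodic g (2*Real.pi)) :
    (∫ x in (0:ℝ)..(2*Real.pi), ‖deriv g x‖^2)
      ≤ ∫ x in (0:ℝ)..(2*Real.pi), ‖g x‖ * ‖deriv (deriv g) x‖ := by
  have hpi : (0:ℝ) ≤ 2*Real.pi := by positivity
  have hg1 : ContDiff ℝ ∞ (deriv g) := (contDiff_infty_iff_deriv.mp hg).2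
  have hg2 : ContDiff ℝ ∞ (deriv (deriv g)) := (contDiff_infty_iff_deriv.mp hg1).2
  have hcg : Continuous g := hg.continuous
  have hcg1 : Continuous (deriv g) := hg1.continuous
  have hcg2 : Continuous (deriv (deriv g)) := hg2.continuous
  have hd : ∀ x : ℝ, HasDerivAt g (deriv g x) x :=
    fun x => (hg.differentiable (by norm_num) x).hasDerivAt
  have hd1 : ∀ x : ℝ, HasDerivAt (deriv g) (deriv (deriv g) x) x :=
    fun x => (hg1.differentiable (by norm_num) x).hasDerivAt
  set F : ℝ → ℂ := fun x => g x * (starRingEnd ℂ) (deriv g x) with hF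
  set F' : ℝ → ℂ := fun x =>
    deriv g x * (starRingEnd ℂ) (deriv g x) + g x * (starRingEnd ℂ) (deriv (deriv g) x) with hF'
  have hFd : ∀ x : ℝ, HasDerivAt F (F' x) x := by
    intro x
    have h2 : HasDerivAt (fun y => (starRingEnd ℂ) (deriv g y))
        ((starRingEnd ℂ) (deriv (deriv g) x)) x := by
      simpa only [starRingEnd_apply] using (hd1 x).star
    exact (hd x).mul h2
  have hconj1 : Continuous (fun x => (starRingEnd ℂ) (deriv g x)) := by
    simpa only [starRingEnd_apply] using hcg1.star
  have hconj2 : Continuous (fun x => (starRingEnd ℂ) (deriv (deriv g) x)) := by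
    simpa only [starRingEnd_apply] using hcg2.star
  have hF'cont : Continuous F' := ((hcg1.mul hconj1)).add (hcg.mul hconj2)
  have hint : (∫ x in (0:ℝ)..(2*Real.pi), F' x) = F (2*Real.pi) - F 0 :=
    integral_eq_sub_of_hasDerivAt (fun x _ => hFd x) (hF'cont.intervalIntegrable _ _)
  have hFper : F (2*Real.pi) = F 0 := by
    have h1 : g (0 + 2*Real.pi) = g 0 := hper 0
    have h2 : deriv g (0 + 2*Real.pi) = deriv g 0 := periodic_deriv' hper 0
    simp only [zero_add] at h1 h2
    simp [hF, h1, h2]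
  have hzero : (∫ x in (0:ℝ)..(2*Real.pi), F' x) = 0 := by rw [hint, hFper, sub_self]
  have hsplit : (∫ x in (0:ℝ)..(2*Real.pi), deriv g x * (starRingEnd ℂ) (deriv g x))
      = - ∫ x in (0:ℝ)..(2*Real.pi), g x * (starRingEnd ℂ) (deriv (deriv g) x) := by
    have i1 : IntervalIntegrable (fun x => deriv g x * (starRingEnd ℂ) (deriv g x))
        volume 0 (2*Real.pi) := (hcg1.mul hconj1).intervalIntegrable _ _
    have i2 : IntervalIntegrable (fun x => g x * (starRingEnd ℂ) (deriv (deriv g) x))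
        volume 0 (2*Real.pi) := (hcg.mul hconj2).intervalIntegrable _ _
    have h3 := intervalIntegral.integral_add i1 i2
    rw [hF'] at hzero
    rw [h3] at hzero
    linear_combination hzero
  have hpt : ∀ z : ℂ, z * (starRingEnd ℂ) z = ((‖z‖^2 : ℝ) : ℂ) := by
    intro z
    rw [Complex.mul_conj, Complex.normSq_eq_norm_sq]
  have hre : (∫ x in (0:ℝ)..(2*Real.pi), deriv g x * (starRingEnd ℂ) (deriv g x))
      = ((∫ x in (0:ℝ)..(2*Real.pi), ‖deriv g x‖^2 : ℝ) : ℂ) := by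
    rw [← intervalIntegral.integral_ofReal]
    simp_rw [hpt]
  have hkey : ((∫ x in (0:ℝ)..(2*Real.pi), ‖deriv g x‖^2 : ℝ) : ℂ)
      = - ∫ x in (0:ℝ)..(2*Real.pi), g x * (starRingEnd ℂ) (deriv (deriv g) x) := by
    rw [← hre]; exact hsplit
  have hnn : (0:ℝ) ≤ ∫ x in (0:ℝ)..(2*Real.pi), ‖deriv g x‖^2 :=
    integral_nonneg hpi (fun x _ => sq_nonneg _)
  calc (∫ x in (0:ℝ)..(2*Real.pi), ‖deriv g x‖^2)
      = ‖((∫ x in (0:ℝ)..(2*Real.pi), ‖deriv g x‖^2 : ℝ) : ℂ)‖ := by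
        rw [Complex.norm_real]; exact (abs_of_nonneg hnn).symm
    _ = ‖∫ x in (0:ℝ)..(2*Real.pi), g x * (starRingEnd ℂ) (deriv (deriv g) x)‖ := by
        rw [hkey, norm_neg]
    _ ≤ ∫ x in (0:ℝ)..(2*Real.pi), ‖g x * (starRingEnd ℂ) (deriv (deriv g) x)‖ :=
        intervalIntegral.norm_integral_le_integral_norm hpi
    _ = ∫ x in (0:ℝ)..(2*Real.pi), ‖g x‖ * ‖deriv (deriv g) x‖ := by
        congr 1; funext x; rw [norm_mul, RCLike.norm_conj]

lemma mul_conj_norm (z : ℂ) : z * (starRingEnd ℂ) z = ((‖z‖^2 : ℝ) : ℂ) := by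
  rw [Complex.mul_conj, Complex.normSq_eq_norm_sq]

lemma normsq_hasDerivAt (g : ℝ → ℂ) (hg : ContDiff ℝ ∞ g) (z : ℝ) :
    HasDerivAt (fun y => ‖g y‖^2)
      ((deriv g z * (starRingEnd ℂ) (g z) + g z * (starRingEnd ℂ) (deriv g z)).re) z := by
  have hd : ∀ x : ℝ, HasDerivAt g (deriv g x) x :=
    fun x => (hg.differentiable (by norm_num) x).hasDerivAt
  have hG : HasDerivAt (fun y => g y * (starRingEnd ℂ) (g y))
      (deriv g z * (starRingEnd ℂ) (g z) + g z * (starRingEnd ℂ) (deriv g z)) z := by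
    have h2 : HasDerivAt (fun y => (starRingEnd ℂ) (g y)) ((starRingEnd ℂ) (deriv g z)) z := by
      simpa only [starRingEnd_apply] using (hd z).star
    exact (hd z).mul h2
  have hre : HasDerivAt (fun y => (g y * (starRingEnd ℂ) (g y)).re)
      ((deriv g z * (starRingEnd ℂ) (g z) + g z * (starRingEnd ℂ) (deriv g z)).re) z :=
    (Complex.reCLM.hasFDerivAt.comp_hasDerivAt z hG)
  have heq : (fun y => (g y * (starRingEnd ℂ) (g y)).re) = (fun y => ‖g y‖^2) := by
    funext y; rw [mul_conj_norm, Complex.ofReal_re]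
  rw [heq] at hre
  exact hre

/-- Sobolev sup bound on `[0, 2π]`. -/
lemma supbound (g : ℝ → ℂ) (hg : ContDiff ℝ ∞ g) (hper : Function.Periodic g (2*Real.pi))
    (x : ℝ) (hx : x ∈ Set.Icc (0:ℝ) (2*Real.pi)) :
    ‖g x‖ ≤ Real.sqrt (∫ y in (0:ℝ)..(2*Real.pi), ‖g y‖^2)
      + Real.sqrt (∫ y in (0:ℝ)..(2*Real.pi), ‖deriv g y‖^2) := by
  have hpi : (0:ℝ) ≤ 2*Real.pi := by positivity
  have hpi1 : (1:ℝ) ≤ 2*Real.pi := by nlinarith [Real.pi_gt_three]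
  have hg1 : ContDiff ℝ ∞ (deriv g) := (contDiff_infty_iff_deriv.mp hg).2
  have hcg : Continuous g := hg.continuous
  have hcg1 : Continuous (deriv g) := hg1.continuous
  set a := Real.sqrt (∫ y in (0:ℝ)..(2*Real.pi), ‖g y‖^2) with ha
  set b := Real.sqrt (∫ y in (0:ℝ)..(2*Real.pi), ‖deriv g y‖^2) with hb
  have ha0 : 0 ≤ a := Real.sqrt_nonneg _
  have hb0 : 0 ≤ b := Real.sqrt_nonneg _
  have hInn : (0:ℝ) ≤ ∫ y in (0:ℝ)..(2*Real.pi), ‖g y‖^2 :=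
    integral_nonneg hpi (fun y _ => sq_nonneg _)
  have hIbnn : (0:ℝ) ≤ ∫ y in (0:ℝ)..(2*Real.pi), ‖deriv g y‖^2 :=
    integral_nonneg hpi (fun y _ => sq_nonneg _)
  have ha2 : a^2 = ∫ y in (0:ℝ)..(2*Real.pi), ‖g y‖^2 := Real.sq_sqrt hInn
  have hb2 : b^2 = ∫ y in (0:ℝ)..(2*Real.pi), ‖deriv g y‖^2 := Real.sq_sqrt hIbnn
  -- minimum point
  obtain ⟨y, hy, hymin⟩ := isCompact_Icc.exists_isMinOn (Set.nonempty_Icc.mpr hpi)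
    ((hcg.norm.pow 2).continuousOn :
      ContinuousOn (fun z => ‖g z‖^2) (Set.Icc (0:ℝ) (2*Real.pi)))
  have hymin' : ∀ z ∈ Set.Icc (0:ℝ) (2*Real.pi), ‖g y‖^2 ≤ ‖g z‖^2 := fun z hz => hymin hz
  have hyb : 2*Real.pi * ‖g y‖^2 ≤ a^2 := by
    rw [ha2]
    calc 2*Real.pi * ‖g y‖^2 = ∫ _ in (0:ℝ)..(2*Real.pi), ‖g y‖^2 := by
          rw [intervalIntegral.integral_const]; simp [smul_eq_mul]
    _ ≤ ∫ z in (0:ℝ)..(2*Real.pi), ‖g z‖^2 :=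
        intervalIntegral.integral_mono_on hpi (intervalIntegrable_const)
          (((hcg.norm.pow 2)).intervalIntegrable _ _) hymin'
  have hgy : ‖g y‖^2 ≤ a^2 := by nlinarith [sq_nonneg (‖g y‖)]
  -- derivative of ‖g‖²
  set φ' : ℝ → ℝ := fun z =>
    (deriv g z * (starRingEnd ℂ) (g z) + g z * (starRingEnd ℂ) (deriv g z)).re with hφ'
  have hφ'cont : Continuous φ' := by
    apply Complex.continuous_re.comp
    exact (hcg1.mul (by simpa only [starRingEnd_apply] using hcg.star)).add
      (hcg.mul (by simpa only [starRingEnd_apply] using hcg1.star))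
  have hφ'bd : ∀ z : ℝ, |φ' z| ≤ 2 * (‖g z‖ * ‖deriv g z‖) := by
    intro z
    calc |φ' z| ≤ ‖deriv g z * (starRingEnd ℂ) (g z)
          + g z * (starRingEnd ℂ) (deriv g z)‖ := Complex.abs_re_le_norm _
    _ ≤ ‖deriv g z * (starRingEnd ℂ) (g z)‖
          + ‖g z * (starRingEnd ℂ) (deriv g z)‖ := norm_add_le _ _
    _ = 2 * (‖g z‖ * ‖deriv g z‖) := by
        simp only [norm_mul,
          RCLike.norm_conj]; ring
  -- fundamental theorem between y and x
  have hftc : ∀ c d : ℝ, (∫ z in c..d, φ' z) = ‖g d‖^2 - ‖g c‖^2 := by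
    intro c d
    exact integral_eq_sub_of_hasDerivAt (fun z _ => normsq_hasDerivAt g hg z)
      (hφ'cont.intervalIntegrable _ _)
  have habs : ∀ c d : ℝ, c ∈ Set.Icc (0:ℝ) (2*Real.pi) → d ∈ Set.Icc (0:ℝ) (2*Real.pi) →
      (∫ z in c..d, φ' z) ≤ ∫ z in (0:ℝ)..(2*Real.pi), |φ' z| := by
    intro c d hc hd
    rcases le_total c d with hcd | hcd
    · calc (∫ z in c..d, φ' z) ≤ ∫ z in c..d, |φ' z| :=
          intervalIntegral.integral_mono_on hcd (hφ'cont.intervalIntegrable _ _)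
            (hφ'cont.abs.intervalIntegrable _ _) (fun z _ => le_abs_self _)
      _ ≤ ∫ z in (0:ℝ)..(2*Real.pi), |φ' z| :=
          intervalIntegral.integral_mono_interval hc.1 hcd hd.2
            (Filter.Eventually.of_forall (fun z => abs_nonneg _))
            (hφ'cont.abs.intervalIntegrable _ _)
    · have h1 : (∫ z in c..d, φ' z) = -(∫ z in d..c, φ' z) :=
        (intervalIntegral.integral_symm _ _)
      calc (∫ z in c..d, φ' z) = -(∫ z in d..c, φ' z) := h1
      _ ≤ ∫ z in d..c, |φ' z| := by
          calc -(∫ z in d..c, φ' z) = ∫ z in d..c, -φ' z := by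
                rw [intervalIntegral.integral_neg]
          _ ≤ ∫ z in d..c, |φ' z| :=
              intervalIntegral.integral_mono_on hcd (hφ'cont.neg.intervalIntegrable _ _)
                (hφ'cont.abs.intervalIntegrable _ _) (fun z _ => neg_le_abs _)
      _ ≤ ∫ z in (0:ℝ)..(2*Real.pi), |φ' z| :=
          intervalIntegral.integral_mono_interval hd.1 hcd hc.2
            (Filter.Eventually.of_forall (fun z => abs_nonneg _))
            (hφ'cont.abs.intervalIntegrable _ _)
  have hintabs : (∫ z in (0:ℝ)..(2*Real.pi), |φ' z|) ≤ 2 * (a*b) := by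
    calc (∫ z in (0:ℝ)..(2*Real.pi), |φ' z|)
        ≤ ∫ z in (0:ℝ)..(2*Real.pi), 2 * (‖g z‖ * ‖deriv g z‖) :=
          intervalIntegral.integral_mono_on hpi (hφ'cont.abs.intervalIntegrable _ _)
            ((continuous_const.mul (hcg.norm.mul hcg1.norm)).intervalIntegrable _ _)
            (fun z _ => hφ'bd z)
    _ = 2 * ∫ z in (0:ℝ)..(2*Real.pi), ‖g z‖ * ‖deriv g z‖ := by
        rw [intervalIntegral.integral_const_mul]
    _ ≤ 2 * (a*b) := by
        have := csineq (fun z => ‖g z‖) (fun z => ‖deriv g z‖) hcg.norm hcg1.norm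
        nlinarith [this]
  have hkey : ‖g x‖^2 ≤ (a+b)^2 := by
    have h1 : ‖g x‖^2 - ‖g y‖^2 = ∫ z in y..x, φ' z := (hftc y x).symm
    have h2 := habs y x hy hx
    nlinarith [hgy, hintabs, sq_nonneg (a-b), sq_nonneg b]
  calc ‖g x‖ = Real.sqrt (‖g x‖^2) := (Real.sqrt_sq (norm_nonneg _)).symm
  _ ≤ Real.sqrt ((a+b)^2) := Real.sqrt_le_sqrt hkey
  _ = a + b := Real.sqrt_sq (by linarith)

lemma logconv_step (a : ℕ → ℝ) (ha : ∀ m, 0 ≤ a m)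
    (H : ∀ m, a (m+1)^2 ≤ a m * a (m+2)) :
    ∀ d r, a (r+d) ^ (d+1) ≤ a r * a (r+d+1) ^ d := by
  intro d
  induction d with
  | zero => intro r; simp
  | succ d IH =>
    intro r
    have hX : 0 ≤ a (r+d+1) := ha _
    have hC : 0 ≤ a r * a (r+d+2) ^ (d+1) :=
      mul_nonneg (ha r) (pow_nonneg (ha _) _)
    have key : a (r+d+1) ^ (2*(d+1)) ≤ (a r * a (r+d+2)^(d+1)) * a (r+d+1) ^ d := by
      calc a (r+d+1) ^ (2*(d+1)) = (a (r+d+1) ^ 2) ^ (d+1) := by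
            rw [← pow_mul]
      _ ≤ (a (r+d) * a (r+d+2)) ^ (d+1) :=
            pow_le_pow_left₀ (sq_nonneg _) (by simpa [add_assoc] using H (r+d)) _
      _ = a (r+d) ^ (d+1) * a (r+d+2) ^ (d+1) := mul_pow _ _ _
      _ ≤ (a r * a (r+d+1) ^ d) * a (r+d+2) ^ (d+1) :=
            mul_le_mul_of_nonneg_right (IH r) (pow_nonneg (ha _) _)
      _ = (a r * a (r+d+2)^(d+1)) * a (r+d+1) ^ d := by ring
    rcases eq_or_lt_of_le hX with h0 | hpos
    · have : a (r+(d+1)) ^ (d+1+1) = 0 := by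
        rw [show r+(d+1) = r+d+1 by ring, ← h0]
        simp
      rw [this, show r+(d+1)+1 = r+d+2 by ring]
      exact hC
    · have h2 : a (r+d+1) ^ (d+2) * a (r+d+1) ^ d
          ≤ (a r * a (r+d+2)^(d+1)) * a (r+d+1) ^ d := by
        rw [← pow_add]
        calc a (r+d+1) ^ (d+2+d) = a (r+d+1) ^ (2*(d+1)) := by ring_nf
        _ ≤ _ := key
      have h3 := le_of_mul_le_mul_right h2 (pow_pos hpos d)
      rw [show r+(d+1) = r+d+1 by ring, show r+d+1+1 = r+d+2 by ring]
      exact h3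

lemma logconv (a : ℕ → ℝ) (ha : ∀ m, 0 ≤ a m)
    (H : ∀ m, a (m+1)^2 ≤ a m * a (m+2)) :
    ∀ e d r, a (r+d) ^ (d+e) ≤ a r ^ e * a (r+d+e) ^ d := by
  intro e
  induction e with
  | zero => intro d r; simp
  | succ e IH =>
    intro d r
    rcases Nat.eq_zero_or_pos (d+e) with hde | hde
    · obtain ⟨hd0, he0⟩ : d = 0 ∧ e = 0 := by omega
      subst hd0; subst he0
      simp [logconv_step a ha H 0 r]
    · set A := a (r+d) with hA
      set B := a r with hB
      set Cc := a (r+d+e) with hCc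
      set D := a (r+d+e+1) with hD
      have h1 : A ^ (d+e) ≤ B ^ e * Cc ^ d := IH d r
      have h2 : Cc ^ (d+e+1) ≤ B * D ^ (d+e) := by
        have := logconv_step a ha H (d+e) r
        rw [show r+(d+e) = r+d+e by ring, show r+d+e+1 = r+d+e+1 by ring] at this
        exact this
      have hexp : e*(d+e+1)+d = (e+1)*(d+e) := by ring
      have h1' : (A^(d+e+1))^(d+e) ≤ (B^(e+1) * D^d)^(d+e) := by
        calc (A^(d+e+1))^(d+e) = (A^(d+e))^(d+e+1) := by
              rw [← pow_mul, ← pow_mul, Nat.mul_comm]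
        _ ≤ (B^e * Cc^d)^(d+e+1) := pow_le_pow_left₀ (pow_nonneg (ha _) _) h1 _
        _ = B^(e*(d+e+1)) * (Cc^(d+e+1))^d := by
              rw [mul_pow, ← pow_mul, ← pow_mul, ← pow_mul, Nat.mul_comm d (d+e+1)]
        _ ≤ B^(e*(d+e+1)) * (B * D^(d+e))^d :=
              mul_le_mul_of_nonneg_left
                (pow_le_pow_left₀ (pow_nonneg (ha _) _) h2 d)
                (pow_nonneg (ha _) _)
        _ = (B^(e+1) * D^d)^(d+e) := by
              rw [mul_pow B (D^(d+e)) d, ← mul_assoc, ← pow_add,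
                mul_pow (B^(e+1)) (D^d) (d+e), ← pow_mul, ← pow_mul, ← pow_mul, hexp,
                Nat.mul_comm (d+e) d]
      have hfin : A^(d+e+1) ≤ B^(e+1) * D^d :=
        (pow_le_pow_iff_left₀ (pow_nonneg (ha _) _)
          (mul_nonneg (pow_nonneg (ha _) _) (pow_nonneg (ha _) _))
          (by omega : d+e ≠ 0)).mp h1'
      calc a (r+d) ^ (d+(e+1)) = A ^ (d+e+1) := by rw [hA]; ring_nf
      _ ≤ B^(e+1) * D^d := hfin
      _ = a r ^ (e+1) * a (r+d+(e+1)) ^ d := by rw [hB, hD, show r+d+e+1 = r+d+(e+1) by ring]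

/-- Closing lemma: combines the large-`b` and small-`b` regimes. -/
lemma close_bound (k : ℕ) (hk : 2 ≤ k) (X b a1 a2 Q DD GG Rp : ℝ)
    (hX0 : 0 ≤ X) (hb0 : 0 ≤ b) (hQ0 : 0 ≤ Q) (ha1 : 0 ≤ a1) (ha2 : 0 ≤ a2)
    (hDD : 1 ≤ DD) (hGG : 1 ≤ GG) (hRp : 1 ≤ Rp)
    (m₁ m₂ EE : ℕ) (hE : m₁ + m₂ + EE = 2*k - 2) (hm₁ : 1 ≤ m₁) (hm₂ : 1 ≤ m₂)
    (hXQ : X ≤ Q * (a1 * a2))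
    (ha1b : a1 ≤ b) (ha2b : a2 ≤ b)
    (ha1p : 1 ≤ b → a1^(k-1) ≤ Rp^(k-1) * b^(m₁-1))
    (ha2p : 1 ≤ b → a2^(k-1) ≤ Rp^(k-1) * b^(m₂-1))
    (hQp : 1 ≤ b → Q^(k-1) ≤ DD * b^EE)
    (hQs : b ≤ 1 → Q ≤ GG) :
    X ≤ (GG + (DD * Rp^(k-1) * Rp^(k-1)) ^ ((1:ℝ)/((k:ℝ)-1)))
      * b ^ ((2*(k:ℝ)-4)/((k:ℝ)-1)) := by
  have hkR : (2:ℝ) ≤ (k:ℝ) := by exact_mod_cast hk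
  have hq : (0:ℝ) < (k:ℝ) - 1 := by linarith
  set α := (2*(k:ℝ)-4)/((k:ℝ)-1) with hα
  have hα0 : 0 ≤ α := div_nonneg (by linarith) hq.le
  have hα2 : α ≤ 2 := by rw [hα, div_le_iff₀ hq]; linarith
  set DDR := DD * Rp^(k-1) * Rp^(k-1) with hDDR
  have hRpk : (0:ℝ) < Rp^(k-1) := pow_pos (by linarith) _
  have hDDRpos : 0 < DDR := by positivity
  have hC2pos : 0 < DDR ^ ((1:ℝ)/((k:ℝ)-1)) := Real.rpow_pos_of_pos hDDRpos _
  have hbα : 0 ≤ b ^ α := Real.rpow_nonneg hb0 _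
  rcases le_or_gt 1 b with hb1 | hb1
  · -- large b
    have key : X^(k-1) ≤ DDR * b^(2*k-4) := by
      calc X^(k-1) ≤ (Q * (a1*a2))^(k-1) := pow_le_pow_left₀ hX0 hXQ _
      _ = Q^(k-1) * (a1^(k-1) * a2^(k-1)) := by rw [mul_pow, mul_pow]
      _ ≤ (DD * b^EE) * ((Rp^(k-1) * b^(m₁-1)) * (Rp^(k-1) * b^(m₂-1))) := by
          apply mul_le_mul (hQp hb1) _ (by positivity) (by positivity)
          exact mul_le_mul (ha1p hb1) (ha2p hb1) (by positivity) (by positivity)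
      _ = DDR * b^(EE + (m₁-1) + (m₂-1)) := by rw [hDDR, pow_add, pow_add]; ring
      _ = DDR * b^(2*k-4) := by congr 2; omega
    have hcast : ((k-1 : ℕ) : ℝ) = (k:ℝ) - 1 := by
      have : (1:ℕ) ≤ k := by omega
      push_cast [Nat.cast_sub this]; ring
    have hXeq : X = (X^(k-1)) ^ ((1:ℝ)/((k:ℝ)-1)) := by
      rw [← Real.rpow_natCast X (k-1), ← Real.rpow_mul hX0, hcast]
      rw [mul_one_div, div_self hq.ne', Real.rpow_one]
    have hXle : X ≤ (DDR * b^(2*k-4)) ^ ((1:ℝ)/((k:ℝ)-1)) := by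
      rw [hXeq]
      exact Real.rpow_le_rpow (pow_nonneg hX0 _) key (by positivity)
    have hsplit : (DDR * b^(2*k-4)) ^ ((1:ℝ)/((k:ℝ)-1))
        = DDR ^ ((1:ℝ)/((k:ℝ)-1)) * b ^ α := by
      rw [Real.mul_rpow hDDRpos.le (pow_nonneg hb0 _)]
      congr 1
      rw [← Real.rpow_natCast b (2*k-4), ← Real.rpow_mul hb0]
      congr 1
      have h4 : (4:ℕ) ≤ 2*k := by omega
      rw [hα]
      push_cast [Nat.cast_sub h4]
      field_simp
    calc X ≤ (DDR * b^(2*k-4)) ^ ((1:ℝ)/((k:ℝ)-1)) := hXle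
    _ = DDR ^ ((1:ℝ)/((k:ℝ)-1)) * b ^ α := hsplit
    _ ≤ (GG + DDR ^ ((1:ℝ)/((k:ℝ)-1))) * b ^ α := by nlinarith
  · -- small b
    have hX2 : X ≤ GG * b^2 := by
      calc X ≤ Q * (a1 * a2) := hXQ
      _ ≤ GG * (b * b) := by
          apply mul_le_mul (hQs hb1.le) _ (by positivity) (by linarith)
          exact mul_le_mul ha1b ha2b ha2 hb0
      _ = GG * b^2 := by ring
    have hb2α : b^2 ≤ b^α := by
      rcases eq_or_lt_of_le hb0 with h0 | hbpos
      · rw [← h0]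
        have : (0:ℝ)^2 = 0 := by norm_num
        rw [this]
        exact Real.rpow_nonneg le_rfl _
      · calc b^2 = b ^ ((2:ℕ):ℝ) := by rw [Real.rpow_natCast]
        _ ≤ b ^ α := by
            apply Real.rpow_le_rpow_of_exponent_ge hbpos hb1.le
            exact_mod_cast hα2
    calc X ≤ GG * b^2 := hX2
    _ ≤ GG * b^α := by nlinarith
    _ ≤ (GG + DDR ^ ((1:ℝ)/((k:ℝ)-1))) * b^α := by nlinarith
lemma addpow (x y c : ℝ) (hx : 0 ≤ x) (hy : 0 ≤ y) (N : ℕ)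
    (h1 : x^N ≤ c) (h2 : y^N ≤ c) : (x+y)^N ≤ 2^N * c := by
  rcases le_total x y with h | h
  · calc (x+y)^N ≤ (2*y)^N := pow_le_pow_left₀ (by linarith) (by linarith) N
    _ = 2^N * y^N := mul_pow 2 y N
    _ ≤ 2^N * c := by
        have : (0:ℝ) ≤ 2^N := by positivity
        nlinarith
  · calc (x+y)^N ≤ (2*x)^N := pow_le_pow_left₀ (by linarith) (by linarith) N
    _ = 2^N * x^N := mul_pow 2 x N
    _ ≤ 2^N * c := by
        have : (0:ℝ) ≤ 2^N := by positivity
        nlinarith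

lemma prodpow {ι : Type*} [DecidableEq ι] (S : Finset ι) (f : ι → ℝ) (g : ι → ℕ)
    (M N : ℕ) (D₀ b : ℝ) (hD₀ : 1 ≤ D₀) (hb0 : 0 ≤ b) (hcard : S.card ≤ N)
    (hf0 : ∀ s ∈ S, 0 ≤ f s) (hfp : ∀ s ∈ S, f s ^ M ≤ D₀ * b ^ (g s)) :
    (∏ s ∈ S, f s) ^ M ≤ D₀^N * b ^ (∑ s ∈ S, g s) := by
  calc (∏ s ∈ S, f s)^M = ∏ s ∈ S, f s ^ M := by rw [Finset.prod_pow]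
  _ ≤ ∏ s ∈ S, (D₀ * b ^ g s) :=
      Finset.prod_le_prod (fun s hs => pow_nonneg (hf0 s hs) M) hfp
  _ = D₀^(S.card) * b^(∑ s ∈ S, g s) := by
      rw [Finset.prod_mul_distrib, Finset.prod_const, Finset.prod_pow_eq_pow_sum]
  _ ≤ D₀^N * b^(∑ s ∈ S, g s) :=
      mul_le_mul_of_nonneg_right (pow_le_pow_right₀ hD₀ hcard) (pow_nonneg hb0 _)

lemma exists_two_pos {ι : Type*} [Fintype ι] [DecidableEq ι] (κ : ι → ℕ) (k : ℕ)
    (hk : 2 ≤ k) (htop : ∀ s, κ s ≤ k - 1) (hsum : ∑ s, κ s = 2*k-2) :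
    ∃ s₁ s₂ : ι, s₁ ≠ s₂ ∧ 1 ≤ κ s₁ ∧ 1 ≤ κ s₂ := by
  by_contra hcon
  push_neg at hcon
  rcases Finset.exists_ne_zero_of_sum_ne_zero (s := Finset.univ) (f := κ)
    (by rw [hsum]; omega) with ⟨s₁, -, hs₁⟩
  have hrest : ∀ s ∈ Finset.univ, s ≠ s₁ → κ s = 0 := by
    intro s _ hs
    have := hcon s₁ s (fun e => hs e.symm) (by omega)
    omega
  have := Finset.sum_eq_single s₁ hrest (fun h => absurd (Finset.mem_univ s₁) h)
  have h1 := htop s₁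
  omega

lemma main_bound (k : ℕ) (hk : 2 ≤ k) (R : ℝ) (hR : 0 < R)
    (n : ℕ) (hn : 2 ≤ n) [NeZero n]
    (i j : Fin n → ℕ)
    (hi : ∀ l l' : Fin n, l ≤ l' → i l' ≤ i l)
    (hj : ∀ l l' : Fin n, l ≤ l' → j l' ≤ j l)
    (hsum : (∑ l, (i l + j l)) = 2 * k - 2)
    (hi0 : i 0 ≤ k - 1) (hj0 : j 0 ≤ k - 1) :
    ∃ C : ℝ, 0 < C ∧
      ∀ u : ℝ → ℂ, ContDiff ℝ (⊤ : ℕ∞) u → Function.Periodic u (2 * Real.pi) →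
        HkNorm 1 u ≤ R →
        (∫ x in (0:ℝ)..(2 * Real.pi),
            (∏ l, ‖pD (i l) u x‖) * ∏ l, ‖pD (j l) u x‖)
          ≤ C * HkNorm k u ^ ((2 * (k : ℝ) - 4) / ((k : ℝ) - 1)) := by
  have hpi : (0:ℝ) ≤ 2 * Real.pi := by positivity
  set Rp : ℝ := max R 1 with hRpdef
  have hRp1 : (1:ℝ) ≤ Rp := le_max_right _ _
  have hRRp : R ≤ Rp := le_max_left _ _
  set D₀ : ℝ := 2^(k-1) * Rp^(k-1) with hD₀def
  have hD₀1 : (1:ℝ) ≤ D₀ := by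
    have h1 : (1:ℝ) ≤ 2^(k-1) := one_le_pow₀ (by norm_num)
    have h2 : (1:ℝ) ≤ Rp^(k-1) := one_le_pow₀ hRp1
    nlinarith
  set DD : ℝ := D₀^(2*n) with hDDdef
  have hDD1 : (1:ℝ) ≤ DD := one_le_pow₀ hD₀1
  set GG : ℝ := 2^(2*n) with hGGdef
  have hGG1 : (1:ℝ) ≤ GG := one_le_pow₀ (by norm_num)
  refine ⟨GG + (DD * Rp^(k-1) * Rp^(k-1)) ^ ((1:ℝ)/((k:ℝ)-1)), ?_, ?_⟩
  · have : (0:ℝ) < (DD * Rp^(k-1) * Rp^(k-1)) ^ ((1:ℝ)/((k:ℝ)-1)) :=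
      Real.rpow_pos_of_pos (by positivity) _
    linarith
  intro u hu hper hH1
  -- basic facts
  set A : ℕ → ℝ := fun m => Real.sqrt (L2sq (pD m u)) with hAdef
  set b : ℝ := HkNorm k u with hbdef
  have hL2 : ∀ f : ℝ → ℂ, 0 ≤ L2sq f :=
    fun f => intervalIntegral.integral_nonneg hpi (fun x _ => sq_nonneg _)
  have hA0 : ∀ m, 0 ≤ A m := fun m => Real.sqrt_nonneg _
  have hAsq : ∀ m, A m ^ 2 = L2sq (pD m u) := fun m => Real.sq_sqrt (hL2 _)
  have hb0 : 0 ≤ b := Real.sqrt_nonneg _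
  have hucd : ContDiff ℝ ∞ u := hu.of_le (mod_cast le_top)
  have hpDcd : ∀ m, ContDiff ℝ ∞ (pD m u) := fun m => contDiff_iteratedDeriv hucd m
  have hpDc : ∀ m, Continuous (pD m u) := fun m => (hpDcd m).continuous
  have hpDper : ∀ m, Function.Periodic (pD m u) (2*Real.pi) :=
    fun m => periodic_iteratedDeriv hper m
  have hpDsucc : ∀ m, pD (m+1) u = deriv (pD m u) := fun m => iteratedDeriv_succ
  have hpD0 : pD 0 u = u := iteratedDeriv_zero
  -- interpolation inequality chain
  have hIBP : ∀ m, A (m+1)^2 ≤ A m * A (m+2) := by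
    intro m
    have h1 := ibp (pD m u) (hpDcd m) (hpDper m)
    rw [← hpDsucc m] at h1
    rw [show deriv (pD (m+1) u) = pD (m+2) u by rw [hpDsucc (m+1)]] at h1
    have h2 := csineq (fun x => ‖pD m u x‖) (fun x => ‖pD (m+2) u x‖)
      (hpDc m).norm (hpDc _).norm
    calc A (m+1)^2 = L2sq (pD (m+1) u) := hAsq _
    _ ≤ ∫ x in (0:ℝ)..(2*Real.pi), ‖pD m u x‖ * ‖pD (m+2) u x‖ := h1
    _ ≤ Real.sqrt (∫ x in (0:ℝ)..(2*Real.pi), ‖pD m u x‖^2)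
          * Real.sqrt (∫ x in (0:ℝ)..(2*Real.pi), ‖pD (m+2) u x‖^2) := h2
    _ = A m * A (m+2) := rfl
  have hItp := logconv A hA0 hIBP
  -- comparisons with b and R
  have hA0b : A 0 ≤ b := by
    rw [hAdef, hbdef]
    apply Real.sqrt_le_sqrt
    calc L2sq (pD 0 u) = L2sq u := by rw [hpD0]
    _ ≤ HkSq k u := le_add_of_nonneg_right (hL2 _)
  have hAkb : A k ≤ b := by
    rw [hAdef, hbdef]
    apply Real.sqrt_le_sqrt
    exact le_add_of_nonneg_left (hL2 _)
  have hA0R : A 0 ≤ R := by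
    refine le_trans ?_ hH1
    rw [hAdef]
    apply Real.sqrt_le_sqrt
    calc L2sq (pD 0 u) = L2sq u := by rw [hpD0]
    _ ≤ HkSq 1 u := le_add_of_nonneg_right (hL2 _)
  have hA1R : A 1 ≤ R := by
    refine le_trans ?_ hH1
    rw [hAdef]
    apply Real.sqrt_le_sqrt
    exact le_add_of_nonneg_left (hL2 _)
  have hAmb : ∀ m, m ≤ k → A m ≤ b := by
    intro m hm
    obtain ⟨e, he⟩ : ∃ e, m + e = k := ⟨k - m, by omega⟩
    have h := hItp e m 0
    simp only [zero_add] at h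
    have h2 : A m ^ (m+e) ≤ b ^ (m+e) := by
      calc A m ^ (m+e) ≤ A 0 ^ e * A (m+e) ^ m := h
      _ ≤ b ^ e * b ^ m := by
          apply mul_le_mul (pow_le_pow_left₀ (hA0 0) hA0b e)
            (pow_le_pow_left₀ (hA0 _) (he ▸ hAkb) m) (pow_nonneg (hA0 _) _)
            (pow_nonneg hb0 _)
      _ = b ^ (m+e) := by rw [← pow_add]; ring_nf
    exact (pow_le_pow_iff_left₀ (hA0 m) hb0 (by omega : m+e ≠ 0)).mp h2
  have hAmp : ∀ m, m ≤ k → 1 ≤ b → A m ^ (k-1) ≤ Rp^(k-1) * b^(m-1) := by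
    intro m hm hb1
    match m with
    | 0 =>
      simp only [Nat.zero_sub, pow_zero, mul_one]
      exact pow_le_pow_left₀ (hA0 0) (hA0R.trans hRRp) _
    | (d+1) =>
      obtain ⟨e, he⟩ : ∃ e, 1 + d + e = k := ⟨k - (d+1), by omega⟩
      have h := hItp e d 1
      have hde : d + e = k - 1 := by omega
      have hd1 : d + 1 - 1 = d := by omega
      rw [show (1:ℕ)+d = d+1 by ring] at h
      rw [hde] at h
      rw [hd1]
      calc A (d+1) ^ (k-1) ≤ A 1 ^ e * A (d+1+e) ^ d := h
      _ ≤ Rp ^ (k-1) * b ^ d := by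
          apply mul_le_mul _ _ (pow_nonneg (hA0 _) _) (by positivity)
          · calc A 1 ^ e ≤ Rp ^ e := pow_le_pow_left₀ (hA0 1) (hA1R.trans hRRp) e
            _ ≤ Rp ^ (k-1) := pow_le_pow_right₀ hRp1 (by omega)
          · have : d+1+e = k := by omega
            exact pow_le_pow_left₀ (hA0 _) (this ▸ hAmb k le_rfl) d
  -- sup bounds
  set T : ℕ → ℝ := fun m => A m + A (m+1) with hTdef
  have hT0 : ∀ m, 0 ≤ T m := fun m => add_nonneg (hA0 _) (hA0 _)
  have hsup : ∀ m, ∀ x ∈ Set.Icc (0:ℝ) (2*Real.pi), ‖pD m u x‖ ≤ T m := by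
    intro m x hx
    have h := supbound (pD m u) (hpDcd m) (hpDper m) x hx
    rw [← hpDsucc m] at h
    exact h
  have hTpow : ∀ m, m + 1 ≤ k → 1 ≤ b → T m ^ (k-1) ≤ D₀ * b ^ m := by
    intro m hm hb1
    have h1 : A m ^ (k-1) ≤ Rp^(k-1) * b^m := by
      calc A m ^ (k-1) ≤ Rp^(k-1) * b^(m-1) := hAmp m (by omega) hb1
      _ ≤ Rp^(k-1) * b^m := by
          apply mul_le_mul_of_nonneg_left (pow_le_pow_right₀ hb1 (Nat.sub_le m 1))
            (by positivity)
    have h2 : A (m+1) ^ (k-1) ≤ Rp^(k-1) * b^m := by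
      have := hAmp (m+1) (by omega) hb1
      simpa using this
    calc T m ^ (k-1) ≤ 2^(k-1) * (Rp^(k-1) * b^m) :=
        addpow _ _ _ (hA0 m) (hA0 (m+1)) _ h1 h2
    _ = D₀ * b ^ m := by rw [hD₀def]; ring
  have hTsmall : ∀ m, m + 1 ≤ k → b ≤ 1 → T m ≤ 2 := by
    intro m hm hb1
    have h1 : A m ≤ 1 := (hAmb m (by omega)).trans hb1
    have h2 : A (m+1) ≤ 1 := (hAmb (m+1) (by omega)).trans hb1
    rw [hTdef]; dsimp only; linarith
  -- combined index family
  set κ : Fin n ⊕ Fin n → ℕ := Sum.elim i j with hκdef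
  have hκtop : ∀ s, κ s ≤ k - 1 := by
    intro s
    rcases s with l | l
    · exact le_trans (hi 0 l (Fin.zero_le l)) hi0
    · exact le_trans (hj 0 l (Fin.zero_le l)) hj0
  have hκk : ∀ s, κ s + 1 ≤ k := fun s => by have := hκtop s; omega
  have hκsum : ∑ s, κ s = 2*k-2 := by
    rw [Fintype.sum_sum_type]
    simp only [hκdef, Sum.elim_inl, Sum.elim_inr]
    rw [← Finset.sum_add_distrib] at *
    exact hsum
  obtain ⟨s₁, s₂, hne, hκ1, hκ2⟩ := exists_two_pos κ k hk hκtop hκsum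
  set S : Finset (Fin n ⊕ Fin n) := (Finset.univ.erase s₁).erase s₂ with hSdef
  have hs₂mem : s₂ ∈ Finset.univ.erase s₁ :=
    Finset.mem_erase.mpr ⟨fun e => hne e.symm, Finset.mem_univ _⟩
  have hdecomp : ∀ f : (Fin n ⊕ Fin n) → ℝ,
      (∏ s, f s) = f s₁ * (f s₂ * ∏ s ∈ S, f s) := by
    intro f
    rw [← Finset.mul_prod_erase _ f (Finset.mem_univ s₁), ← Finset.mul_prod_erase _ f hs₂mem]
  have hdecompN : ∀ f : (Fin n ⊕ Fin n) → ℕ,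
      (∑ s, f s) = f s₁ + (f s₂ + ∑ s ∈ S, f s) := by
    intro f
    rw [← Finset.add_sum_erase _ f (Finset.mem_univ s₁), ← Finset.add_sum_erase _ f hs₂mem]
  set EE : ℕ := ∑ s ∈ S, κ s with hEEdef
  have hE : κ s₁ + κ s₂ + EE = 2*k-2 := by
    rw [← hκsum, hdecompN κ]; ring
  set Q : ℝ := ∏ s ∈ S, T (κ s) with hQdef
  have hQ0 : 0 ≤ Q := Finset.prod_nonneg (fun s _ => hT0 _)
  have hScard : S.card ≤ 2*n := by
    calc S.card ≤ Finset.univ.card := Finset.card_le_card (fun s hs =>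
      Finset.mem_univ s)
    _ = 2*n := by simp [Finset.card_univ, Fintype.card_sum]; ring
  -- pointwise bound and integral bound
  have hptwise : ∀ x ∈ Set.Icc (0:ℝ) (2*Real.pi),
      (∏ l, ‖pD (i l) u x‖) * ∏ l, ‖pD (j l) u x‖
        ≤ Q * (‖pD (κ s₁) u x‖ * ‖pD (κ s₂) u x‖) := by
    intro x hx
    have hid : (∏ l, ‖pD (i l) u x‖) * ∏ l, ‖pD (j l) u x‖
        = ∏ s : Fin n ⊕ Fin n, ‖pD (κ s) u x‖ := by
      rw [Fintype.prod_sum_type]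
      simp only [hκdef, Sum.elim_inl, Sum.elim_inr]
    rw [hid, hdecomp (fun s => ‖pD (κ s) u x‖)]
    have hP : ∏ s ∈ S, ‖pD (κ s) u x‖ ≤ Q :=
      Finset.prod_le_prod (fun s _ => norm_nonneg _) (fun s _ => hsup (κ s) x hx)
    calc ‖pD (κ s₁) u x‖ * (‖pD (κ s₂) u x‖ * ∏ s ∈ S, ‖pD (κ s) u x‖)
        = (∏ s ∈ S, ‖pD (κ s) u x‖) * (‖pD (κ s₁) u x‖ * ‖pD (κ s₂) u x‖) := by ring
    _ ≤ Q * (‖pD (κ s₁) u x‖ * ‖pD (κ s₂) u x‖) :=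
        mul_le_mul_of_nonneg_right hP (by positivity)
  have hcont1 : Continuous (fun x => (∏ l, ‖pD (i l) u x‖) * ∏ l, ‖pD (j l) u x‖) := by
    apply Continuous.mul <;>
    · apply continuous_finset_prod
      intro l _
      exact (hpDc _).norm
  have hcont2 : Continuous (fun x => ‖pD (κ s₁) u x‖ * ‖pD (κ s₂) u x‖) :=
    (hpDc _).norm.mul (hpDc _).norm
  have hXQ : (∫ x in (0:ℝ)..(2*Real.pi), (∏ l, ‖pD (i l) u x‖) * ∏ l, ‖pD (j l) u x‖)
      ≤ Q * (A (κ s₁) * A (κ s₂)) := by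
    calc (∫ x in (0:ℝ)..(2*Real.pi), (∏ l, ‖pD (i l) u x‖) * ∏ l, ‖pD (j l) u x‖)
        ≤ ∫ x in (0:ℝ)..(2*Real.pi), Q * (‖pD (κ s₁) u x‖ * ‖pD (κ s₂) u x‖) :=
          intervalIntegral.integral_mono_on hpi (hcont1.intervalIntegrable _ _)
            ((continuous_const.mul hcont2).intervalIntegrable _ _) hptwise
    _ = Q * ∫ x in (0:ℝ)..(2*Real.pi), ‖pD (κ s₁) u x‖ * ‖pD (κ s₂) u x‖ :=
          intervalIntegral.integral_const_mul _ _
    _ ≤ Q * (A (κ s₁) * A (κ s₂)) := by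
          apply mul_le_mul_of_nonneg_left _ hQ0
          exact csineq _ _ (hpDc _).norm (hpDc _).norm
  have hX0 : 0 ≤ ∫ x in (0:ℝ)..(2*Real.pi), (∏ l, ‖pD (i l) u x‖) * ∏ l, ‖pD (j l) u x‖ :=
    intervalIntegral.integral_nonneg hpi (fun x _ =>
      mul_nonneg (Finset.prod_nonneg fun l _ => norm_nonneg _)
        (Finset.prod_nonneg fun l _ => norm_nonneg _))
  -- Q bounds
  have hQp : 1 ≤ b → Q ^ (k-1) ≤ DD * b ^ EE := by
    intro hb1
    rw [hQdef, hEEdef, hDDdef]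
    exact prodpow S (fun s => T (κ s)) (fun s => κ s) (k-1) (2*n) D₀ b hD₀1 hb0 hScard
      (fun s _ => hT0 _) (fun s _ => hTpow (κ s) (hκk s) hb1)
  have hQs : b ≤ 1 → Q ≤ GG := by
    intro hb1
    calc Q ≤ ∏ _s ∈ S, (2:ℝ) :=
        Finset.prod_le_prod (fun s _ => hT0 _) (fun s _ => hTsmall (κ s) (hκk s) hb1)
    _ = 2 ^ S.card := Finset.prod_const 2
    _ ≤ GG := by rw [hGGdef]; exact pow_le_pow_right₀ (by norm_num) hScard
  -- close
  exact close_bound k hk _ b (A (κ s₁)) (A (κ s₂)) Q DD GG Rp hX0 hb0 hQ0 (hA0 _) (hA0 _)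
    hDD1 hGG1 hRp1 (κ s₁) (κ s₂) EE hE hκ1 hκ2 hXQ
    (hAmb _ (by have := hκtop s₁; omega)) (hAmb _ (by have := hκtop s₂; omega))
    (hAmp _ (by have := hκtop s₁; omega)) (hAmp _ (by have := hκtop s₂; omega))
    hQp hQs

end Helpers

/-- Bound (4.2): time-independent estimate for the densities indexed by `𝓒ᵏ ∪ 𝓖ᵏ`. -/
theorem CG_pointwise_bound
    (k p : ℕ) (hk : 2 ≤ k) (hp : 2 ≤ p) (R : ℝ) (hR : 0 < R) :
    (∀ ij : (Fin (2 * p + 1) → ℕ) × (Fin (2 * p + 1) → ℕ), ij ∈ Cset p k →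
      ∃ C : ℝ, 0 < C ∧
        ∀ u : ℝ → ℂ, ContDiff ℝ (⊤ : ℕ∞) u → Function.Periodic u (2 * Real.pi) →
          HkNorm 1 u ≤ R →
          (∫ x in (0:ℝ)..(2 * Real.pi),
              (∏ l, ‖pD (ij.1 l) u x‖) * ∏ l, ‖pD (ij.2 l) u x‖)
            ≤ C * HkNorm k u ^ ((2 * (k : ℝ) - 4) / ((k : ℝ) - 1))) ∧
    (∀ ij : (Fin (p + 1) → ℕ) × (Fin (p + 1) → ℕ), ij ∈ Gset p k →
      ∃ C : ℝ, 0 < C ∧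
        ∀ u : ℝ → ℂ, ContDiff ℝ (⊤ : ℕ∞) u → Function.Periodic u (2 * Real.pi) →
          HkNorm 1 u ≤ R →
          (∫ x in (0:ℝ)..(2 * Real.pi),
              (∏ l, ‖pD (ij.1 l) u x‖) * ∏ l, ‖pD (ij.2 l) u x‖)
            ≤ C * HkNorm k u ^ ((2 * (k : ℝ) - 4) / ((k : ℝ) - 1))) := by
  constructor
  · intro ij hij
    obtain ⟨hi, hj, hsum, hi0, hj0⟩ := hij
    exact main_bound k hk R hR (2*p+1) (by omega) ij.1 ij.2 hi hj hsum hi0 hj0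
  · intro ij hij
    obtain ⟨hi, hj, hsum, hi0, hj0⟩ := hij
    exact main_bound k hk R hR (p+1) (by omega) ij.1 ij.2 hi hj hsum hi0 hj0
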